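/- arXiv:2011.09683 — 2 statements merged into one kernel-verified Lean document; each statement's English description precedes it below -/
import Mathlib

section
/- Let f : [0,∞) → ℝ be nonnegative and continuous, with ∫₀^∞ f(t) dt < ∞, and suppose f satisfies the growth bound f(t') ≤ (f(t)^{1/2} + C(t'-t))² for all t' ≥ t ≥ 0 and some constant C > 0. Then f(t) → 0 as t → ∞. -/
/-!
If `f(t₀) ≥ ε`, the growth bound read backwards says `√f` can drop by at most `√ε / 2` on a short
window `[t₀ - δ, t₀]`, so `f ≥ ε / 4` there and `∫_{t₀-δ}^{t₀} f ≥ δ ε / 4`. Integrability forces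
these window integrals to tend to `0`, so `f(t₀) ≥ ε` can only happen for bounded `t₀`.
-/

open MeasureTheory Set Filter Topology

theorem Real.sqrt_le_sqrt_add_abs_mul_of_le_sq {x y c d : ℝ} (h : y ≤ (√x + c * d) ^ 2)
    (hd : 0 ≤ d) : √y ≤ √x + |c| * d :=
  calc √y ≤ √((√x + c * d) ^ 2) := Real.sqrt_le_sqrt h
    _ = |√x + c * d| := Real.sqrt_sq_eq_abs _
    _ ≤ |√x| + |c * d| := abs_add_le _ _
    _ = √x + |c| * d := by rw [abs_mul, abs_of_nonneg (Real.sqrt_nonneg x), abs_of_nonneg hd]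

theorem MeasureTheory.IntegrableOn.tendsto_intervalIntegral_sub_atTop {f : ℝ → ℝ}
    {μ : Measure ℝ} {a : ℝ} (hf : IntegrableOn f (Ioi a) μ) (δ : ℝ) :
    Tendsto (fun t => ∫ x in (t - δ)..t, f x ∂μ) atTop (𝓝 0) := by
  have hlim := intervalIntegral_tendsto_integral_Ioi a hf tendsto_id
  have hlim_shift :=
    intervalIntegral_tendsto_integral_Ioi a hf (tendsto_atTop_add_const_right _ (-δ) tendsto_id)
  have hinterval : ∀ b, a ≤ b → IntervalIntegrable f μ a b := fun b hb =>
    (intervalIntegrable_iff_integrableOn_Ioc_of_le hb).2 (hf.mono_set Ioc_subset_Ioi_self)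
  have hsub : ∀ᶠ t in atTop, ∫ x in a..t, f x ∂μ - ∫ x in a..(t + -δ), f x ∂μ
      = ∫ x in (t - δ)..t, f x ∂μ := by
    filter_upwards [eventually_ge_atTop a, eventually_ge_atTop (a + δ)] with t ht htδ
    rw [intervalIntegral.integral_interval_sub_left (hinterval t ht)
      (hinterval _ (by linarith)), sub_eq_add_neg]
  simpa using (hlim.sub hlim_shift).congr' hsub

theorem mul_le_intervalIntegral_of_sqrt_le_sqrt_add {f : ℝ → ℝ} {K δ ε t : ℝ} (hK : 0 ≤ K)
    (hδ : 0 ≤ δ) (hKδ : K * δ ≤ √ε / 2) (hε : ε ≤ f t)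
    (hf0 : ∀ s ∈ Icc (t - δ) t, 0 ≤ f s) (hf : IntervalIntegrable f volume (t - δ) t)
    (hgrowth : ∀ s ∈ Icc (t - δ) t, √(f t) ≤ √(f s) + K * (t - s)) :
    δ * (ε / 4) ≤ ∫ s in (t - δ)..t, f s := by
  have hlower : ∀ s ∈ Icc (t - δ) t, ε / 4 ≤ f s := by
    intro s hs
    have hdrop : K * (t - s) ≤ √ε / 2 :=
      (mul_le_mul_of_nonneg_left (by linarith [hs.1]) hK).trans hKδ
    have hhalf : √ε / 2 ≤ √(f s) := by linarith [Real.sqrt_le_sqrt hε, hgrowth s hs]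
    calc ε / 4 ≤ (√ε / 2) ^ 2 := by rw [div_pow, Real.sq_sqrt']; linarith [le_max_left ε 0]
      _ ≤ √(f s) ^ 2 := pow_le_pow_left₀ (by positivity) hhalf 2
      _ = f s := Real.sq_sqrt (hf0 s hs)
  calc δ * (ε / 4) = ∫ _ in (t - δ)..t, ε / 4 := by simp [mul_div_assoc]
    _ ≤ ∫ s in (t - δ)..t, f s :=
      intervalIntegral.integral_mono_on (by linarith) intervalIntegrable_const hf hlower

theorem tendsto_zero_of_integrable_of_growth_general (f : ℝ → ℝ) (C : ℝ)
    (hf0 : ∀ t, 0 ≤ t → 0 ≤ f t)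
    (hint : MeasureTheory.IntegrableOn f (Set.Ici 0))
    (hgrowth : ∀ t t', 0 ≤ t → t ≤ t' →
      f t' ≤ (Real.sqrt (f t) + C * (t' - t)) ^ 2) :
    Filter.Tendsto f Filter.atTop (nhds 0) := by
  have hint' : IntegrableOn f (Ioi 0) := hint.mono_set Ioi_subset_Ici_self
  refine tendsto_order.2 ⟨fun a ha => ?_, fun ε hε => ?_⟩
  · filter_upwards [eventually_ge_atTop 0] with t ht using ha.trans_le (hf0 t ht)
  obtain ⟨δ, hδ, hCδ⟩ := exists_pos_mul_lt (half_pos (Real.sqrt_pos.2 hε)) |C|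
  filter_upwards [(hint'.tendsto_intervalIntegral_sub_atTop δ).eventually
      (gt_mem_nhds (by positivity : 0 < δ * (ε / 4))), eventually_ge_atTop δ]
    with t hsmall htδ
  by_contra! hft
  have hwindow := mul_le_intervalIntegral_of_sqrt_le_sqrt_add (abs_nonneg C) hδ.le hCδ.le hft
    (fun s hs => hf0 s (by linarith [hs.1]))
    ((intervalIntegrable_iff_integrableOn_Ioc_of_le (by linarith)).2
      (hint'.mono_set fun s hs => lt_of_le_of_lt (by linarith) hs.1))
    (fun s hs => Real.sqrt_le_sqrt_add_abs_mul_of_le_sq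
      (hgrowth s t (by linarith [hs.1]) hs.2) (by linarith [hs.2]))
  linarith

theorem tendsto_zero_of_integrable_of_growth (f : ℝ → ℝ) (C : ℝ) (hC : 0 < C)
    (hf0 : ∀ t, 0 ≤ t → 0 ≤ f t)
    (hcont : ContinuousOn f (Set.Ici 0))
    (hint : MeasureTheory.IntegrableOn f (Set.Ici 0))
    (hgrowth : ∀ t t', 0 ≤ t → t ≤ t' →
      f t' ≤ (Real.sqrt (f t) + C * (t' - t)) ^ 2) :
    Filter.Tendsto f Filter.atTop (nhds 0) :=
  tendsto_zero_of_integrable_of_growth_general f C hf0 hint hgrowth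
end

section
/- If h : [0,∞) → ℝ is continuous and nonnegative, and there exist ε ∈ (0,1), C > 0 and a sequence t_i → ∞ with t_i ≥ 1, t_{i+1} ≥ t_i + 1, such that h(t_i) ≥ ε and h(t) ≥ (ε^{1/2} − C(t_i − t))² for t ∈ [max(t_i−1, t_i − ε^{1/2}/C), t_i], then ∫₀^∞ h = ∞. -/
open MeasureTheory Set

theorem not_integrable_of_spikes (h : ℝ → ℝ) (C ε : ℝ) (t : ℕ → ℝ)
    (hcont : ContinuousOn h (Set.Ici 0))
    (hnonneg : ∀ s, 0 ≤ s → 0 ≤ h s)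
    (hC : 0 < C) (hε0 : 0 < ε) (hε1 : ε < 1)
    (ht1 : 1 ≤ t 0)
    (hgap : ∀ i, t i + 1 ≤ t (i+1))
    (htop : Filter.Tendsto t Filter.atTop Filter.atTop)
    (hval : ∀ i, ε ≤ h (t i))
    (hlb : ∀ i, ∀ s ∈ Set.Icc (t i - min 1 (Real.sqrt ε / C)) (t i),
      (Real.sqrt ε - C * (t i - s))^2 ≤ h s) :
    ¬ MeasureTheory.IntegrableOn h (Set.Ici 0) := by
  intro hint
  have hsqrt : 0 < Real.sqrt ε := Real.sqrt_pos.mpr hε0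
  set δ : ℝ := min 1 (Real.sqrt ε / (2*C)) with hδdef
  have hδpos : 0 < δ := lt_min one_pos (by positivity)
  have hδ1 : δ ≤ 1 := min_le_left _ _
  have hδ2 : δ ≤ Real.sqrt ε / (2*C) := min_le_right _ _
  have hδle : δ ≤ min 1 (Real.sqrt ε / C) := by
    refine le_min hδ1 (hδ2.trans ?_)
    rw [div_le_div_iff₀ (by positivity) hC]
    nlinarith [hsqrt.le]
  -- monotone t
  have hmono : StrictMono t := strictMono_nat_of_lt_succ fun i => by
    have := hgap i; linarith
  have ht0 : ∀ i, 1 ≤ t i := fun i => ht1.trans (hmono.monotone (Nat.zero_le i))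
  set A : ℕ → Set ℝ := fun i => Ioc (t i - δ) (t i) with hA
  have hAsub : ∀ i, A i ⊆ Ici 0 := by
    intro i s hs
    have := ht0 i
    have := hs.1
    simp only [mem_Ici]; linarith
  -- lower bound on A i
  have hlow : ∀ i, ∀ s ∈ A i, ε/4 ≤ h s := by
    intro i s hs
    have hs1 : t i - δ < s := hs.1
    have hs2 : s ≤ t i := hs.2
    have hmem : s ∈ Icc (t i - min 1 (Real.sqrt ε / C)) (t i) :=
      ⟨by linarith [hδle], hs2⟩
    have hb := hlb i s hmem
    have h1 : C * (t i - s) ≤ Real.sqrt ε / 2 := by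
      have : t i - s ≤ δ := by linarith
      have h2 : C * (t i - s) ≤ C * δ := by nlinarith
      have h3 : C * δ ≤ Real.sqrt ε / 2 := by
        rw [hδdef] at *
        have := hδ2
        rw [le_div_iff₀ (by positivity)] at this
        nlinarith
      linarith
    have h2 : Real.sqrt ε / 2 ≤ Real.sqrt ε - C * (t i - s) := by linarith
    have h3 : (Real.sqrt ε / 2)^2 ≤ (Real.sqrt ε - C * (t i - s))^2 := by
      apply sq_le_sq' <;> nlinarith
    have h4 : (Real.sqrt ε / 2)^2 = ε / 4 := by
      rw [div_pow, Real.sq_sqrt hε0.le]; norm_num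
    linarith
  -- integral over A i
  have hintA : ∀ i, IntegrableOn h (A i) := fun i => hint.mono_set (hAsub i)
  have hmeasA : ∀ i, MeasurableSet (A i) := fun i => measurableSet_Ioc
  have hvolA : ∀ i, (volume (A i)).toReal = δ := by
    intro i
    rw [hA]
    simp only [Real.volume_Ioc]
    rw [ENNReal.toReal_ofReal (by linarith)]
    ring
  have hkey : ∀ i, ε/4 * δ ≤ ∫ s in A i, h s := by
    intro i
    have := MeasureTheory.setIntegral_ge_of_const_le (hmeasA i)
      (by rw [hA]; exact (measure_Ioc_lt_top).ne) (hlow i) (hintA i)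
    rw [measureReal_def, hvolA i, smul_eq_mul] at this
    linarith
  -- disjointness
  have hdisj : ∀ i j, i < j → Disjoint (A i) (A j) := by
    intro i j hij
    rw [Set.Ioc_disjoint_Ioc]
    have h1 : t i + 1 ≤ t (i+1) := hgap i
    have h2 : t (i+1) ≤ t j := hmono.monotone hij
    have : t i ≤ t j - δ := by linarith
    calc min (t i) (t j) ≤ t i := min_le_left _ _
      _ ≤ max (t i - δ) (t j - δ) := this.trans (le_max_right _ _)
  -- sum bound
  have hsum : ∀ N : ℕ, (N : ℝ) * (ε/4 * δ) ≤ ∫ s in Ici (0:ℝ), h s := by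
    intro N
    have hdisj' : (↑(Finset.range N) : Set ℕ).Pairwise (Function.onFun Disjoint A) := by
      intro i _ j _ hij
      rcases lt_or_gt_of_ne hij with hlt | hgt
      · exact hdisj i j hlt
      · exact (hdisj j i hgt).symm
    have heq : ∫ s in (⋃ i ∈ Finset.range N, A i), h s
        = ∑ i ∈ Finset.range N, ∫ s in A i, h s :=
      MeasureTheory.integral_biUnion_finset (Finset.range N)
        (fun i _ => hmeasA i) hdisj' (fun i _ => hintA i)
    have hle : ∫ s in (⋃ i ∈ Finset.range N, A i), h s ≤ ∫ s in Ici (0:ℝ), h s := by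
      apply MeasureTheory.setIntegral_mono_set hint
      · filter_upwards [ae_restrict_mem measurableSet_Ici] with x hx
        exact hnonneg x hx
      · exact HasSubset.Subset.eventuallyLE (Set.iUnion₂_subset fun i _ => hAsub i)
    calc (N : ℝ) * (ε/4 * δ) = ∑ _i ∈ Finset.range N, (ε/4 * δ) := by
            rw [Finset.sum_const, Finset.card_range, nsmul_eq_mul]
      _ ≤ ∑ i ∈ Finset.range N, ∫ s in A i, h s :=
            Finset.sum_le_sum fun i _ => hkey i
      _ = ∫ s in (⋃ i ∈ Finset.range N, A i), h s := heq.symm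
      _ ≤ ∫ s in Ici (0:ℝ), h s := hle
  -- contradiction
  obtain ⟨N, hN⟩ := exists_nat_gt ((∫ s in Ici (0:ℝ), h s) / (ε/4 * δ))
  have hc : 0 < ε/4 * δ := by positivity
  have := hsum N
  rw [div_lt_iff₀ hc] at hN
  linarith
end
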